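/- Let R be a commutative ring, let x₁, …, x_s be a d-sequence in R, let Q = (x₁, …, x_s), and let W = (0) : Q. Let M be an ideal of R with Q ⊆ M. Then W : M = W. -/

import Mathlib

open Ideal IsLocalRing

/-- A sequence `x₁, …, x_s` is a `d`-sequence. -/
def IsDSeq {R : Type*} [CommRing R] {s : ℕ} (x : Fin s → R) : Prop :=
  ∀ i j : Fin s, i ≤ j →
    (Ideal.span (x '' {k | k < i})).colon (Ideal.span {x i}) =
    (Ideal.span (x '' {k | k < i})).colon (Ideal.span {x i * x j})

/-- A strong `d`-sequence: all power sequences are `d`-sequences. -/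
def IsStrongDSeq {R : Type*} [CommRing R] {s : ℕ} (x : Fin s → R) : Prop :=
  ∀ n : Fin s → ℕ, (∀ i, 1 ≤ n i) → IsDSeq (fun i => x i ^ n i)

/-- `x₁, …, x_d` is a system of parameters of the local ring `A`. -/
def IsSOP {A : Type*} [CommRing A] [IsLocalRing A] {d : ℕ} (x : Fin d → A) : Prop :=
  ringKrullDim A = d ∧ (Ideal.span (Set.range x)).radical = maximalIdeal A

/-- `Q` is a parameter ideal: generated by a system of parameters. -/
def IsParameterIdeal (A : Type*) [CommRing A] [IsLocalRing A] (Q : Ideal A) : Prop :=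
  ∃ (d : ℕ) (x : Fin d → A), IsSOP x ∧ Q = Ideal.span (Set.range x)

/-- A Buchsbaum local ring: every system of parameters is a weak `A`-sequence. -/
def IsBuchsbaum (A : Type*) [CommRing A] [IsLocalRing A] : Prop :=
  ∀ (d : ℕ) (x : Fin d → A), IsSOP x →
    ∀ i : Fin d,
      (Ideal.span (x '' {k | k < i})).colon (Ideal.span {x i}) =
      (Ideal.span (x '' {k | k < i})).colon (maximalIdeal A)

/-- The 0-th local cohomology `H⁰_𝔪(A)`, as the ideal of elements killed by a power of `𝔪`. -/
noncomputable def H0 (A : Type*) [CommRing A] [IsLocalRing A] : Ideal A :=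
  ⨆ n : ℕ, (⊥ : Ideal A).colon ((maximalIdeal A) ^ n : Ideal A)

/-- The length of a module, as the Krull dimension of its submodule lattice (valued in `ℕ∞`). -/
noncomputable def moduleLength (R M : Type*) [Ring R] [AddCommGroup M] [Module R M] : ℕ∞ :=
  (Order.krullDim (Submodule R M)).unbotD 0

/-- `ℓ_A(I/Q)`: the length of `I/Q`. -/
noncomputable def quotLength {A : Type*} [CommRing A] (Q I : Ideal A) : ℕ∞ :=
  moduleLength (A ⧸ Q) (I.map (Ideal.Quotient.mk Q))

/-- `r(A)`: the supremum of the indices of reducibility of parameter ideals. -/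
noncomputable def typeR (A : Type*) [CommRing A] [IsLocalRing A] : ℕ∞ :=
  ⨆ Q ∈ {Q : Ideal A | IsParameterIdeal A Q}, quotLength Q (Q.colon (maximalIdeal A))

/-- The reduction number `r_Q(I) = min{n ≥ 0 ∣ I^{n+1} = Q Iⁿ}`. -/
noncomputable def reductionNumber {A : Type*} [CommRing A] (Q I : Ideal A) : ℕ :=
  sInf {n : ℕ | I ^ (n + 1) = Q * I ^ n}

/-- `x` is integral over the ideal `Q`. -/
def IsIntegralOverIdeal {A : Type*} [CommRing A] (Q : Ideal A) (x : A) : Prop :=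
  ∃ n : ℕ, 0 < n ∧ ∃ c : ℕ → A, (∀ i ∈ Finset.Icc 1 n, c i ∈ Q ^ i) ∧
    x ^ n + ∑ i ∈ Finset.Icc 1 n, c i * x ^ (n - i) = 0

/-- `A` has Hilbert–Samuel multiplicity `e` (with respect to its maximal ideal). -/
def HasHSMultiplicity (A : Type*) [CommRing A] [IsLocalRing A] (e : ℕ) : Prop :=
  ∃ d : ℕ, ringKrullDim A = d ∧
    Filter.Tendsto
      (fun n : ℕ =>
        ((d.factorial : ℝ) * ((moduleLength A (A ⧸ (maximalIdeal A) ^ n)).toNat : ℝ)) / (n : ℝ) ^ d)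
      Filter.atTop (nhds (e : ℝ))

/-- The local ring `A` has depth `n`. -/
def HasDepth (A : Type*) [CommRing A] [IsLocalRing A] (n : ℕ) : Prop :=
  (∃ rs : List A, rs.length = n ∧ (∀ a ∈ rs, a ∈ maximalIdeal A) ∧
      RingTheory.Sequence.IsRegular A rs) ∧
    ∀ rs : List A, (∀ a ∈ rs, a ∈ maximalIdeal A) → RingTheory.Sequence.IsRegular A rs →
      rs.length ≤ n

/-!
For a `d`-sequence with `Q = (x₁, …, x_s)` and `W = 0 : Q` one has `Q ∩ W = 0`: if
`y = z + c xₘ` with `z ∈ (x₁, …, x_{m-1})` kills `xₘ`, then `c xₘ² ∈ (x₁, …, x_{m-1})`, so the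
`d`-sequence condition `(x₁, …, x_{m-1}) : xₘ² = (x₁, …, x_{m-1}) : xₘ` puts `c xₘ`, hence `y`,
into the shorter ideal; descending to `m = 0` gives `y = 0`.
Now if `a M ⊆ W` then `a q ∈ Q ∩ W = 0` for every `q ∈ Q ⊆ M`, so `a ∈ W`.
-/

namespace Ideal

variable {R : Type*} [CommRing R]

theorem mem_of_mem_sup_span_singleton_of_mul_mem {I : Ideal R} {t y : R}
    (ht : I.colon (span {t}) = I.colon (span {t * t})) (hy : y ∈ I ⊔ span {t})
    (hyt : y * t ∈ I) : y ∈ I := by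
  obtain ⟨z, hz, w, hw, rfl⟩ := Submodule.mem_sup.mp hy
  obtain ⟨c, rfl⟩ := mem_span_singleton'.mp hw
  have hc : c ∈ I.colon (span {t * t}) := by
    rw [mem_colon_span_singleton]
    convert I.sub_mem hyt (I.mul_mem_right t hz) using 1
    ring
  rw [← ht, mem_colon_span_singleton] at hc
  exact I.add_mem hz hc

theorem bot_colon_colon_eq_of_le_of_disjoint {Q M : Ideal R} (hQM : Q ≤ M)
    (hQW : Disjoint Q ((⊥ : Ideal R).colon Q)) :
    ((⊥ : Ideal R).colon Q).colon M = (⊥ : Ideal R).colon Q := by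
  refine le_antisymm (fun a ha => ?_) fun a ha =>
    Submodule.mem_colon.mpr fun p _ => mul_mem_right p _ ha
  refine Submodule.mem_colon.mpr fun q hq => ?_
  have haqW : a * q ∈ (⊥ : Ideal R).colon Q := Submodule.mem_colon.mp ha q (hQM hq)
  exact hQW.le_bot ⟨Q.mul_mem_left a hq, haqW⟩

end Ideal

namespace IsDSeq

variable {R : Type*} [CommRing R] {s : ℕ} {x : Fin s → R}

theorem eq_zero_of_mem_span_prefix_of_mul_eq_zero (hx : IsDSeq x) {y : R}
    (hyx : ∀ i, y * x i = 0) :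
    ∀ m ≤ s, y ∈ span (x '' {k | (k : ℕ) < m}) → y = 0 := by
  intro m
  induction m with
  | zero => simp
  | succ m ih =>
    intro hms hy
    let i : Fin s := ⟨m, hms⟩
    have hprefix : {k : Fin s | (k : ℕ) < m + 1} = insert i {k : Fin s | (k : ℕ) < m} := by
      ext k
      simp [i, Fin.ext_iff, le_iff_eq_or_lt]
    rw [hprefix, Set.image_insert_eq, span_insert, sup_comm] at hy
    have hyxi : y * x i ∈ span (x '' {k | (k : ℕ) < m}) := hyx i ▸ zero_mem _
    exact ih (m.le_succ.trans hms) (mem_of_mem_sup_span_singleton_of_mul_mem (hx i i le_rfl) hy hyxi)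

theorem disjoint_span_range_bot_colon (hx : IsDSeq x) :
    Disjoint (span (Set.range x)) ((⊥ : Ideal R).colon (span (Set.range x))) := by
  refine disjoint_iff_inf_le.mpr fun y ⟨hyQ, hyW⟩ => ?_
  have hyx : ∀ i, y * x i = 0 := fun i => by
    simpa [mul_comm] using Submodule.mem_colon.mp hyW (x i) (subset_span ⟨i, rfl⟩)
  have hall : x '' {k : Fin s | (k : ℕ) < s} = Set.range x := by
    simp [Fin.is_lt, Set.image_univ]
  exact hx.eq_zero_of_mem_span_prefix_of_mul_eq_zero hyx s le_rfl (hall ▸ hyQ)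

end IsDSeq

theorem stmt4_general {R : Type*} [CommRing R] {s : ℕ} (x : Fin s → R)
    (hx : IsDSeq x) (M : Ideal R) (hQM : Ideal.span (Set.range x) ≤ M) :
    ((⊥ : Ideal R).colon (Ideal.span (Set.range x))).colon M =
      (⊥ : Ideal R).colon (Ideal.span (Set.range x)) :=
  bot_colon_colon_eq_of_le_of_disjoint hQM hx.disjoint_span_range_bot_colon

theorem stmt4 {R : Type*} [CommRing R] {s : ℕ} (hs : 1 ≤ s) (x : Fin s → R)
    (hx : IsDSeq x) (M : Ideal R) (hQM : Ideal.span (Set.range x) ≤ M) :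
    ((⊥ : Ideal R).colon (Ideal.span (Set.range x))).colon M =
      (⊥ : Ideal R).colon (Ideal.span (Set.range x)) :=
  stmt4_general x hx M hQM
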